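/- Disjunction is a proper connective of LP^{→,F}: for every set Γ of formulas and all formulas A, B and C, Γ ∪ {A ∨ B} ⊨ C if and only if Γ ∪ {A} ⊨ C and Γ ∪ {B} ⊨ C. -/
import Mathlib

/-- The three truth values: true, false, both-true-and-false. -/
inductive TV : Type
  | t : TV
  | f : TV
  | b : TV
  deriving DecidableEq

/-- Formulas of LP^{→,F}: propositional variables, falsity constant,
    negation, conjunction, disjunction, implication. -/
inductive Fm : Type
  | var : ℕ → Fm
  | fls : Fm
  | neg : Fm → Fm
  | conj : Fm → Fm → Fm
  | disj : Fm → Fm → Fm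
  | impl : Fm → Fm → Fm
  deriving DecidableEq

/-- The LP^{→,F} negation truth function. -/
def TV.negLP : TV → TV
  | .t => .f
  | .f => .t
  | .b => .b

/-- The LP^{→,F} conjunction truth function. -/
def TV.andLP : TV → TV → TV
  | .f, _ => .f
  | _, .f => .f
  | .t, .t => .t
  | _, _ => .b

/-- The LP^{→,F} disjunction truth function. -/
def TV.orLP : TV → TV → TV
  | .t, _ => .t
  | _, .t => .t
  | .f, .f => .f
  | _, _ => .b

/-- The LP^{→,F} implication truth function: t if the antecedent is f,
    otherwise the value of the consequent. -/
def TV.implLP : TV → TV → TV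
  | .f, _ => .t
  | _, y => y

/-- A valuation for LP^{→,F}. -/
def IsValuation (ν : Fm → TV) : Prop :=
  ν .fls = .f ∧
  (∀ A, ν (.neg A) = (ν A).negLP) ∧
  (∀ A B, ν (.conj A B) = (ν A).andLP (ν B)) ∧
  (∀ A B, ν (.disj A B) = (ν A).orLP (ν B)) ∧
  (∀ A B, ν (.impl A B) = (ν A).implLP (ν B))

/-- Logical equivalence in LP^{→,F}. -/
def LEquiv (A B : Fm) : Prop := ∀ ν : Fm → TV, IsValuation ν → ν A = ν B

/-- The truth constant T, an abbreviation for ¬F. -/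
def Fm.tru : Fm := .neg .fls

/-- A truth value is designated iff it is t or ⊤. -/
def Designated (v : TV) : Prop := v = .t ∨ v = .b

/-- Semantic logical consequence in LP^{→,F}. -/
def LPCons (Γ : Set Fm) (A : Fm) : Prop :=
  ∀ ν : Fm → TV, IsValuation ν → ((∃ B ∈ Γ, ν B = .f) ∨ Designated (ν A))

/-- Validity in LP^{→,F}. -/
def LPValid (A : Fm) : Prop := ∀ ν : Fm → TV, IsValuation ν → Designated (ν A)

/-- Disjunction is a proper connective of LP^{→,F}. -/
theorem lp_proper_disjunction :
    ∀ (Γ : Set Fm) (A B C : Fm),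
      LPCons (insert (A.disj B) Γ) C ↔ (LPCons (insert A Γ) C ∧ LPCons (insert B Γ) C) := by
  intro Γ A B C
  constructor
  · intro h
    constructor
    · intro ν hν
      rcases h ν hν with ⟨D, hD, hDf⟩ | hdes
      · rcases hD with rfl | hD
        · left
          refine ⟨A, Set.mem_insert _ _, ?_⟩
          rw [hν.2.2.2.1] at hDf
          cases hA : ν A <;> cases hB : ν B <;> simp [hA, hB, TV.orLP] at hDf ⊢
        · exact Or.inl ⟨D, Set.mem_insert_of_mem _ hD, hDf⟩
      · exact Or.inr hdes
    · intro ν hν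
      rcases h ν hν with ⟨D, hD, hDf⟩ | hdes
      · rcases hD with rfl | hD
        · left
          refine ⟨B, Set.mem_insert _ _, ?_⟩
          rw [hν.2.2.2.1] at hDf
          cases hA : ν A <;> cases hB : ν B <;> simp [hA, hB, TV.orLP] at hDf ⊢
        · exact Or.inl ⟨D, Set.mem_insert_of_mem _ hD, hDf⟩
      · exact Or.inr hdes
  · rintro ⟨h1, h2⟩ ν hν
    rcases h1 ν hν with ⟨D, hD, hDf⟩ | hdes
    · rcases hD with rfl | hD
      · rcases h2 ν hν with ⟨E, hE, hEf⟩ | hdes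
        · rcases hE with rfl | hE
          · left
            refine ⟨D.disj E, Set.mem_insert _ _, ?_⟩
            rw [hν.2.2.2.1, hDf, hEf]
            rfl
          · exact Or.inl ⟨E, Set.mem_insert_of_mem _ hE, hEf⟩
        · exact Or.inr hdes
      · exact Or.inl ⟨D, Set.mem_insert_of_mem _ hD, hDf⟩
    · exact Or.inr hdes
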